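/- There exist a universal constant C₂ > 1 and a constant ε̄ ∈ (0,1) such that the following holds for any 0 < ε ≤ ε̄. Suppose the quadruple F = (U,V,W,S) is ε-close to F⋆ in the aligned sense. Then ‖((UᵀU)⁻¹Uᵀ, (VᵀV)⁻¹Vᵀ, (WᵀW)⁻¹Wᵀ)·((U,V,W)·S⋆ − X⋆)‖_F² ≤ 3·(‖D_U‖_F² + ‖D_V‖_F² + ‖D_W‖_F²) + C₂·ε·D², where D² = ‖Δ_U·Σ⋆,1‖_F² + ‖Δ_V·Σ⋆,2‖_F² + ‖Δ_W·Σ⋆,3‖_F² + ‖Δ_S‖_F². -/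

import Mathlib

open Matrix MeasureTheory
open scoped Kronecker Classical BigOperators

namespace ScaledGD

noncomputable section

abbrev Tensor (n1 n2 n3 : ℕ) := Fin n1 → Fin n2 → Fin n3 → ℝ

/-- mode-1 matricization, columns indexed by (i3, i2) to match the Kronecker convention -/
def M1 {n1 n2 n3 : ℕ} (X : Tensor n1 n2 n3) : Matrix (Fin n1) (Fin n3 × Fin n2) ℝ :=
  Matrix.of fun i p => X i p.2 p.1

def M2 {n1 n2 n3 : ℕ} (X : Tensor n1 n2 n3) : Matrix (Fin n2) (Fin n3 × Fin n1) ℝ :=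
  Matrix.of fun i p => X p.2 i p.1

def M3 {n1 n2 n3 : ℕ} (X : Tensor n1 n2 n3) : Matrix (Fin n3) (Fin n2 × Fin n1) ℝ :=
  Matrix.of fun i p => X p.2 p.1 i

/-- Tucker product (A,B,C)·S -/
def tucker {m1 m2 m3 r1 r2 r3 : ℕ}
    (A : Matrix (Fin m1) (Fin r1) ℝ) (B : Matrix (Fin m2) (Fin r2) ℝ)
    (C : Matrix (Fin m3) (Fin r3) ℝ) (S : Tensor r1 r2 r3) : Tensor m1 m2 m3 :=
  fun i1 i2 i3 => ∑ j1, ∑ j2, ∑ j3, A i1 j1 * B i2 j2 * C i3 j3 * S j1 j2 j3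

/-- Frobenius norm of a matrix -/
def frob {m n : Type*} [Fintype m] [Fintype n] (A : Matrix m n ℝ) : ℝ :=
  Real.sqrt (∑ i, ∑ j, (A i j) ^ 2)

/-- Frobenius norm of a tensor -/
def frobT {n1 n2 n3 : ℕ} (X : Tensor n1 n2 n3) : ℝ :=
  Real.sqrt (∑ i1, ∑ i2, ∑ i3, (X i1 i2 i3) ^ 2)

def innerT {n1 n2 n3 : ℕ} (X Y : Tensor n1 n2 n3) : ℝ :=
  ∑ i1, ∑ i2, ∑ i3, X i1 i2 i3 * Y i1 i2 i3

def innerM {m n : Type*} [Fintype m] [Fintype n] (A B : Matrix m n ℝ) : ℝ :=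
  ∑ i, ∑ j, A i j * B i j

def rowNorm {m n : Type*} [Fintype n] (A : Matrix m n ℝ) (i : m) : ℝ :=
  Real.sqrt (∑ j, (A i j) ^ 2)

/-- ‖·‖_{2,∞}: largest ℓ2 norm of the rows -/
def norm2inf {m n : Type*} [Fintype m] [Fintype n] (A : Matrix m n ℝ) : ℝ :=
  ⨆ i, rowNorm A i

def vecNorm {n : Type*} [Fintype n] (x : n → ℝ) : ℝ :=
  Real.sqrt (∑ i, (x i) ^ 2)

/-- spectral norm -/
def opNorm {m n : Type*} [Fintype m] [Fintype n] (A : Matrix m n ℝ) : ℝ :=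
  sSup { c | ∃ x : n → ℝ, vecNorm x ≤ 1 ∧ c = vecNorm (A.mulVec x) }

/-- a factor quadruple -/
structure Quad (n1 n2 n3 r1 r2 r3 : ℕ) where
  U : Matrix (Fin n1) (Fin r1) ℝ
  V : Matrix (Fin n2) (Fin r2) ℝ
  W : Matrix (Fin n3) (Fin r3) ℝ
  S : Tensor r1 r2 r3

variable {n1 n2 n3 r1 r2 r3 : ℕ}

/-- the tensor (U,V,W)·S represented by a quadruple -/
def Quad.X (F : Quad n1 n2 n3 r1 r2 r3) : Tensor n1 n2 n3 := tucker F.U F.V F.W F.S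

def breveU (F : Quad n1 n2 n3 r1 r2 r3) : Matrix (Fin n3 × Fin n2) (Fin r1) ℝ :=
  (F.W ⊗ₖ F.V) * (M1 F.S)ᵀ

def breveV (F : Quad n1 n2 n3 r1 r2 r3) : Matrix (Fin n3 × Fin n1) (Fin r2) ℝ :=
  (F.W ⊗ₖ F.U) * (M2 F.S)ᵀ

def breveW (F : Quad n1 n2 n3 r1 r2 r3) : Matrix (Fin n2 × Fin n1) (Fin r3) ℝ :=
  (F.V ⊗ₖ F.U) * (M3 F.S)ᵀ


/-- a tangent-space style tensor (used in Lemma on tangent concentration) -/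
def tangentT (Fs : Quad n1 n2 n3 r1 r2 r3) (U' : Matrix (Fin n1) (Fin r1) ℝ)
    (V' : Matrix (Fin n2) (Fin r2) ℝ) (W' : Matrix (Fin n3) (Fin r3) ℝ)
    (S1 S2 S3 : Tensor r1 r2 r3) : Tensor n1 n2 n3 :=
  tucker U' Fs.V Fs.W S1 + tucker Fs.U V' Fs.W S2 + tucker Fs.U Fs.V W' S3

/-- squared scaled distance (infimum over invertible alignment matrices) -/
def distSq (σ1 : Fin r1 → ℝ) (σ2 : Fin r2 → ℝ) (σ3 : Fin r3 → ℝ)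
    (F Fs : Quad n1 n2 n3 r1 r2 r3) : ℝ :=
  sInf { d : ℝ | ∃ (Q1 : Matrix (Fin r1) (Fin r1) ℝ) (Q2 : Matrix (Fin r2) (Fin r2) ℝ)
      (Q3 : Matrix (Fin r3) (Fin r3) ℝ), IsUnit Q1.det ∧ IsUnit Q2.det ∧ IsUnit Q3.det ∧
      d = (frob ((F.U * Q1 - Fs.U) * Matrix.diagonal σ1)) ^ 2
        + (frob ((F.V * Q2 - Fs.V) * Matrix.diagonal σ2)) ^ 2
        + (frob ((F.W * Q3 - Fs.W) * Matrix.diagonal σ3)) ^ 2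
        + (frobT (tucker Q1⁻¹ Q2⁻¹ Q3⁻¹ F.S - Fs.S)) ^ 2 }

def dist (σ1 : Fin r1 → ℝ) (σ2 : Fin r2 → ℝ) (σ3 : Fin r3 → ℝ)
    (F Fs : Quad n1 n2 n3 r1 r2 r3) : ℝ :=
  Real.sqrt (distSq σ1 σ2 σ3 F Fs)

def firstVal {r : ℕ} (σ : Fin r → ℝ) : ℝ := if h : 0 < r then σ ⟨0, h⟩ else 0

def lastVal {r : ℕ} (σ : Fin r → ℝ) : ℝ := if h : 0 < r then σ ⟨r - 1, by omega⟩ else 0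

def sigmaMax (σ1 : Fin r1 → ℝ) (σ2 : Fin r2 → ℝ) (σ3 : Fin r3 → ℝ) : ℝ :=
  max (firstVal σ1) (max (firstVal σ2) (firstVal σ3))

def sigmaMin (σ1 : Fin r1 → ℝ) (σ2 : Fin r2 → ℝ) (σ3 : Fin r3 → ℝ) : ℝ :=
  min (lastVal σ1) (min (lastVal σ2) (lastVal σ3))

def kappa (σ1 : Fin r1 → ℝ) (σ2 : Fin r2 → ℝ) (σ3 : Fin r3 → ℝ) : ℝ :=
  sigmaMax σ1 σ2 σ3 / sigmaMin σ1 σ2 σ3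

def nmax (n1 n2 n3 : ℕ) : ℕ := max n1 (max n2 n3)

/-- the ground truth structural assumptions: orthonormal factors, and the core tensor
matricizations have Gram matrix `Σ⋆ₖ²` where the `σk` are positive and decreasing
(i.e. they are the nonzero singular values of `M_k(X⋆)` in decreasing order). -/
def GroundTruth (σ1 : Fin r1 → ℝ) (σ2 : Fin r2 → ℝ) (σ3 : Fin r3 → ℝ)
    (Fs : Quad n1 n2 n3 r1 r2 r3) : Prop :=
  (Fs.U)ᵀ * Fs.U = 1 ∧ (Fs.V)ᵀ * Fs.V = 1 ∧ (Fs.W)ᵀ * Fs.W = 1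
  ∧ M1 Fs.S * (M1 Fs.S)ᵀ = Matrix.diagonal (fun i => (σ1 i) ^ 2)
  ∧ M2 Fs.S * (M2 Fs.S)ᵀ = Matrix.diagonal (fun i => (σ2 i) ^ 2)
  ∧ M3 Fs.S * (M3 Fs.S)ᵀ = Matrix.diagonal (fun i => (σ3 i) ^ 2)
  ∧ (∀ i, 0 < σ1 i) ∧ (∀ i, 0 < σ2 i) ∧ (∀ i, 0 < σ3 i)
  ∧ (∀ i j : Fin r1, i ≤ j → σ1 j ≤ σ1 i)
  ∧ (∀ i j : Fin r2, i ≤ j → σ2 j ≤ σ2 i)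
  ∧ (∀ i j : Fin r3, i ≤ j → σ3 j ≤ σ3 i)

/-- μ-incoherence of the ground truth -/
def Incoherent (μ : ℝ) (Fs : Quad n1 n2 n3 r1 r2 r3) : Prop :=
  (n1 : ℝ) / r1 * (norm2inf Fs.U) ^ 2 ≤ μ
  ∧ (n2 : ℝ) / r2 * (norm2inf Fs.V) ^ 2 ≤ μ
  ∧ (n3 : ℝ) / r3 * (norm2inf Fs.W) ^ 2 ≤ μ

/-- one scaled gradient step driven by the "error" tensor E -/
def gdStep (η : ℝ) (E : Tensor n1 n2 n3) (F : Quad n1 n2 n3 r1 r2 r3) :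
    Quad n1 n2 n3 r1 r2 r3 where
  U := F.U - η • (M1 E * breveU F * ((breveU F)ᵀ * breveU F)⁻¹)
  V := F.V - η • (M2 E * breveV F * ((breveV F)ᵀ * breveV F)⁻¹)
  W := F.W - η • (M3 E * breveW F * ((breveW F)ᵀ * breveW F)⁻¹)
  S := F.S - η • tucker (((F.U)ᵀ * F.U)⁻¹ * (F.U)ᵀ) (((F.V)ᵀ * F.V)⁻¹ * (F.V)ᵀ)
      (((F.W)ᵀ * F.W)⁻¹ * (F.W)ᵀ) E

/-- row rescaling factor `1 ∧ B/x` (with the degenerate case x = 0 giving factor 1) -/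
def scaleFac (B : ℝ) (n : ℕ) (x : ℝ) : ℝ :=
  if Real.sqrt n * x = 0 then 1 else min 1 (B / (Real.sqrt n * x))

/-- the scaled projection P_B -/
def scaledProj (B : ℝ) (F : Quad n1 n2 n3 r1 r2 r3) : Quad n1 n2 n3 r1 r2 r3 where
  U := Matrix.of fun i j => scaleFac B n1 (rowNorm (F.U * (breveU F)ᵀ) i) * F.U i j
  V := Matrix.of fun i j => scaleFac B n2 (rowNorm (F.V * (breveV F)ᵀ) i) * F.V i j
  W := Matrix.of fun i j => scaleFac B n3 (rowNorm (F.W * (breveW F)ᵀ) i) * F.W i j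
  S := F.S

def IncoherenceCond (B : ℝ) (F : Quad n1 n2 n3 r1 r2 r3) : Prop :=
  Real.sqrt n1 * norm2inf (F.U * (breveU F)ᵀ) ≤ B
  ∧ Real.sqrt n2 * norm2inf (F.V * (breveV F)ᵀ) ≤ B
  ∧ Real.sqrt n3 * norm2inf (F.W * (breveW F)ᵀ) ≤ B

/-- P_Ω : keep the observed entries, zero elsewhere -/
def sampleT (ω : Fin n1 × Fin n2 × Fin n3 → Bool) (X : Tensor n1 n2 n3) : Tensor n1 n2 n3 :=
  fun i1 i2 i3 => if ω (i1, i2, i3) then X i1 i2 i3 else 0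

/-- Bernoulli(p) distribution on Bool -/
def bernoulliBool (p : ℝ) : Measure Bool :=
  (Real.toNNReal p) • Measure.dirac true + (Real.toNNReal (1 - p)) • Measure.dirac false

instance (p : ℝ) : IsFiniteMeasure (bernoulliBool p) := by
  unfold bernoulliBool; infer_instance

/-- i.i.d. Bernoulli sampling of the indices -/
def berMeasure (n1 n2 n3 : ℕ) (p : ℝ) : Measure (Fin n1 × Fin n2 × Fin n3 → Bool) :=
  Measure.pi fun _ => bernoulliBool p

/-- zero out the diagonal of a square matrix -/
def offdiag {N : Type*} [DecidableEq N] (G : Matrix N N ℝ) : Matrix N N ℝ :=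
  Matrix.of fun i j => if i = j then 0 else G i j

/-- `U` consists of (some choice of) top-r eigenvectors of the symmetric matrix G:
orthonormal columns which are eigenvectors, such that any eigenvector orthogonal to
all columns of U has eigenvalue no larger than the eigenvalues of the columns. -/
def IsTopEigenvectors {N : Type*} [Fintype N] {r : ℕ} (G : Matrix N N ℝ)
    (U : Matrix N (Fin r) ℝ) : Prop :=
  Uᵀ * U = 1 ∧ ∃ μ : Fin r → ℝ,
    (∀ j, G.mulVec (fun i => U i j) = μ j • (fun i => U i j))
    ∧ ∀ (v : N → ℝ) (lam : ℝ), v ≠ 0 → G.mulVec v = lam • v →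
        (∀ j, ∑ i, v i * U i j = 0) → ∀ j, lam ≤ μ j

/-- spectral initialization (before projection) for tensor completion -/
def SpectralInitTC (p : ℝ) (Y : Tensor n1 n2 n3) (F : Quad n1 n2 n3 r1 r2 r3) : Prop :=
  IsTopEigenvectors (offdiag ((p ^ 2)⁻¹ • (M1 Y * (M1 Y)ᵀ))) F.U
  ∧ IsTopEigenvectors (offdiag ((p ^ 2)⁻¹ • (M2 Y * (M2 Y)ᵀ))) F.V
  ∧ IsTopEigenvectors (offdiag ((p ^ 2)⁻¹ • (M3 Y * (M3 Y)ᵀ))) F.W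
  ∧ F.S = p⁻¹ • tucker (F.U)ᵀ (F.V)ᵀ (F.W)ᵀ Y

/-- HOSVD with multilinear rank (r1,r2,r3) -/
def IsHOSVD (X : Tensor n1 n2 n3) (F : Quad n1 n2 n3 r1 r2 r3) : Prop :=
  IsTopEigenvectors (M1 X * (M1 X)ᵀ) F.U
  ∧ IsTopEigenvectors (M2 X * (M2 X)ᵀ) F.V
  ∧ IsTopEigenvectors (M3 X * (M3 X)ᵀ) F.W
  ∧ F.S = tucker (F.U)ᵀ (F.V)ᵀ (F.W)ᵀ X

/-- the measurement map A -/
def Amap {m : ℕ} (Ad : Fin m → Tensor n1 n2 n3) (X : Tensor n1 n2 n3) : Fin m → ℝ :=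
  fun i => innerT (Ad i) X

/-- the adjoint A* -/
def Aadj {m : ℕ} (Ad : Fin m → Tensor n1 n2 n3) (y : Fin m → ℝ) : Tensor n1 n2 n3 :=
  fun i1 i2 i3 => ∑ i, y i * Ad i i1 i2 i3

/-- Gaussian design: all entries of the m measurement tensors are i.i.d. N(0,1/m) -/
def gaussDesign (m n1 n2 n3 : ℕ) : Measure (Fin m → Tensor n1 n2 n3) :=
  Measure.pi fun _ => Measure.pi fun _ => Measure.pi fun _ => Measure.pi fun _ =>
    ProbabilityTheory.gaussianReal 0 (m : NNReal)⁻¹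

/-- tensor restricted isometry property -/
def TRIP {m : ℕ} (Ad : Fin m → Tensor n1 n2 n3) (r1' r2' r3' : ℕ) (δ : ℝ) : Prop :=
  ∀ X : Tensor n1 n2 n3, (M1 X).rank ≤ r1' → (M2 X).rank ≤ r2' → (M3 X).rank ≤ r3' →
    (1 - δ) * (frobT X) ^ 2 ≤ ∑ i, (innerT (Ad i) X) ^ 2
    ∧ ∑ i, (innerT (Ad i) X) ^ 2 ≤ (1 + δ) * (frobT X) ^ 2

/-- ε-closeness in the aligned sense -/
def alignedClose (σ1 : Fin r1 → ℝ) (σ2 : Fin r2 → ℝ) (σ3 : Fin r3 → ℝ)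
    (F Fs : Quad n1 n2 n3 r1 r2 r3) (ε : ℝ) : Prop :=
  (frob ((F.U - Fs.U) * Matrix.diagonal σ1)) ^ 2
  + (frob ((F.V - Fs.V) * Matrix.diagonal σ2)) ^ 2
  + (frob ((F.W - Fs.W) * Matrix.diagonal σ3)) ^ 2
  + (frobT (F.S - Fs.S)) ^ 2 ≤ ε ^ 2 * (sigmaMin σ1 σ2 σ3) ^ 2

/-- the alignment equations -/
def AlignEqs (σ1 : Fin r1 → ℝ) (σ2 : Fin r2 → ℝ) (σ3 : Fin r3 → ℝ)
    (F Fs : Quad n1 n2 n3 r1 r2 r3) : Prop :=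
  (F.U)ᵀ * (F.U - Fs.U) * (Matrix.diagonal σ1 * Matrix.diagonal σ1)
      = M1 (F.S - Fs.S) * (M1 F.S)ᵀ
  ∧ (F.V)ᵀ * (F.V - Fs.V) * (Matrix.diagonal σ2 * Matrix.diagonal σ2)
      = M2 (F.S - Fs.S) * (M2 F.S)ᵀ
  ∧ (F.W)ᵀ * (F.W - Fs.W) * (Matrix.diagonal σ3 * Matrix.diagonal σ3)
      = M3 (F.S - Fs.S) * (M3 F.S)ᵀ

/-- `(UᵀU)^{-1/2}`: inverse of the positive semidefinite square root of the Gram matrix -/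
def invSqrtGram {m r : ℕ} (U : Matrix (Fin m) (Fin r) ℝ) : Matrix (Fin r) (Fin r) ℝ :=
  if h : (Uᵀ * U).PosSemidef then
    ((h.1.eigenvectorUnitary : Matrix (Fin r) (Fin r) ℝ) *
      diagonal (fun i => Real.sqrt (h.1.eigenvalues i)) *
      (star h.1.eigenvectorUnitary : Matrix (Fin r) (Fin r) ℝ))⁻¹ else 1

end



noncomputable section AuxProof

open Matrix

variable {ι κ τ : Type*} [Fintype ι] [Fintype κ] [Fintype τ]

/-- squared euclidean norm of a vector -/
def vnsq (x : ι → ℝ) : ℝ := ∑ i, x i ^ 2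

/-- euclidean norm of a vector -/
def vn (x : ι → ℝ) : ℝ := Real.sqrt (vnsq x)

lemma vnsq_nonneg (x : ι → ℝ) : 0 ≤ vnsq x :=
  Finset.sum_nonneg fun _ _ => sq_nonneg _

lemma vn_nonneg (x : ι → ℝ) : 0 ≤ vn x := Real.sqrt_nonneg _

lemma vn_sq (x : ι → ℝ) : vn x ^ 2 = vnsq x := Real.sq_sqrt (vnsq_nonneg x)

lemma vnsq_pos {x : ι → ℝ} (hx : x ≠ 0) : 0 < vnsq x := by
  rcases (vnsq_nonneg x).lt_or_eq with h | h
  · exact h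
  · exfalso; apply hx; funext i
    have h0 : ∀ j ∈ Finset.univ, (0:ℝ) ≤ x j ^ 2 := fun j _ => sq_nonneg _
    have := (Finset.sum_eq_zero_iff_of_nonneg h0).mp h.symm i (Finset.mem_univ i)
    exact pow_eq_zero_iff (two_ne_zero) |>.mp this

/-- squared Frobenius norm -/
def fsq (A : Matrix ι κ ℝ) : ℝ := ∑ i, ∑ j, A i j ^ 2

lemma fsq_nonneg (A : Matrix ι κ ℝ) : 0 ≤ fsq A :=
  Finset.sum_nonneg fun _ _ => Finset.sum_nonneg fun _ _ => sq_nonneg _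

lemma frob_sq (A : Matrix ι κ ℝ) : frob A ^ 2 = fsq A := Real.sq_sqrt (fsq_nonneg A)

lemma dotProduct_self_eq_vnsq (x : ι → ℝ) : x ⬝ᵥ x = vnsq x := by
  simp [dotProduct, vnsq, sq]

/-- Cauchy-Schwarz for the dot product -/
lemma dot_le_vn (x y : ι → ℝ) : x ⬝ᵥ y ≤ vn x * vn y := by
  have h := Finset.sum_mul_sq_le_sq_mul_sq Finset.univ x y
  calc x ⬝ᵥ y ≤ |x ⬝ᵥ y| := le_abs_self _
    _ = Real.sqrt ((x ⬝ᵥ y) ^ 2) := (Real.sqrt_sq_eq_abs _).symm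
    _ ≤ Real.sqrt (vnsq x * vnsq y) := Real.sqrt_le_sqrt h
    _ = vn x * vn y := Real.sqrt_mul (vnsq_nonneg x) _

lemma vn_add_le (x y : ι → ℝ) : vn (x + y) ≤ vn x + vn y := by
  have h : vnsq (x + y) ≤ (vn x + vn y) ^ 2 := by
    have hd := dot_le_vn x y
    have hsq : vnsq (x + y) = vnsq x + 2 * (x ⬝ᵥ y) + vnsq y := by
      simp [vnsq, dotProduct, Finset.sum_add_distrib, Finset.mul_sum]
      rw [← Finset.sum_add_distrib, ← Finset.sum_add_distrib]
      exact Finset.sum_congr rfl fun i _ => by ring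
    nlinarith [vn_sq x, vn_sq y]
  calc vn (x + y) = Real.sqrt (vnsq (x + y)) := rfl
    _ ≤ Real.sqrt ((vn x + vn y) ^ 2) := Real.sqrt_le_sqrt h
    _ = |vn x + vn y| := Real.sqrt_sq_eq_abs _
    _ = vn x + vn y := abs_of_nonneg (add_nonneg (vn_nonneg x) (vn_nonneg y))

lemma vnsq_le_of_vn_le {x : ι → ℝ} {y : κ → ℝ} (h : vn x ≤ vn y) : vnsq x ≤ vnsq y := by
  rw [← vn_sq, ← vn_sq]
  exact pow_le_pow_left₀ (vn_nonneg x) h 2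

/-- column-wise contraction bound for the Frobenius norm -/
lemma fsq_mul_le {P : Matrix ι κ ℝ} {c : ℝ}
    (h : ∀ x : κ → ℝ, vnsq (P *ᵥ x) ≤ c * vnsq x) (N : Matrix κ τ ℝ) :
    fsq (P * N) ≤ c * fsq N := by
  have key : ∀ j, (∑ i, ((P * N) i j) ^ 2) ≤ c * ∑ k, (N k j) ^ 2 := by
    intro j
    have h1 : (∑ i, ((P * N) i j) ^ 2) = vnsq (P *ᵥ (fun k => N k j)) := by
      simp only [vnsq, Matrix.mul_apply, Matrix.mulVec, dotProduct]
    rw [h1]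
    exact (h _).trans (le_of_eq (by simp [vnsq]))
  calc fsq (P * N) = ∑ j, ∑ i, ((P * N) i j) ^ 2 := Finset.sum_comm
    _ ≤ ∑ j, c * ∑ k, (N k j) ^ 2 := Finset.sum_le_sum fun j _ => key j
    _ = c * ∑ j, ∑ k, (N k j) ^ 2 := by rw [Finset.mul_sum]
    _ = c * fsq N := by rw [show (∑ j, ∑ k, (N k j)^2) = fsq N from Finset.sum_comm]

/-- row-wise Cauchy-Schwarz bound -/
lemma vnsq_mulVec_le (A : Matrix ι κ ℝ) (x : κ → ℝ) :
    vnsq (A *ᵥ x) ≤ fsq A * vnsq x := by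
  have : ∀ i, (A *ᵥ x) i ^ 2 ≤ (∑ j, A i j ^ 2) * vnsq x := by
    intro i
    have := Finset.sum_mul_sq_le_sq_mul_sq Finset.univ (A i) x
    simpa [Matrix.mulVec, dotProduct, vnsq] using this
  calc vnsq (A *ᵥ x) ≤ ∑ i, (∑ j, A i j ^ 2) * vnsq x := Finset.sum_le_sum fun i _ => this i
    _ = fsq A * vnsq x := by rw [← Finset.sum_mul]; rfl

lemma dot_gram (U : Matrix ι κ ℝ) (x : κ → ℝ) :
    x ⬝ᵥ ((Uᵀ * U) *ᵥ x) = vnsq (U *ᵥ x) := by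
  rw [← Matrix.mulVec_mulVec, Matrix.dotProduct_mulVec, Matrix.vecMul_transpose,
    dotProduct_self_eq_vnsq]


section Tensors

variable {n1 n2 n3 m p q : ℕ}

/-- squared Frobenius norm of a tensor -/
def tsq (X : Tensor n1 n2 n3) : ℝ := ∑ i1, ∑ i2, ∑ i3, X i1 i2 i3 ^ 2

lemma tsq_nonneg (X : Tensor n1 n2 n3) : 0 ≤ tsq X :=
  Finset.sum_nonneg fun _ _ => Finset.sum_nonneg fun _ _ =>
    Finset.sum_nonneg fun _ _ => sq_nonneg _

lemma frobT_sq (X : Tensor n1 n2 n3) : frobT X ^ 2 = tsq X := Real.sq_sqrt (tsq_nonneg X)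

lemma frobT_nonneg (X : Tensor n1 n2 n3) : 0 ≤ frobT X := Real.sqrt_nonneg _

/-- flatten a tensor to a vector -/
def flat (X : Tensor n1 n2 n3) : (Fin n1 × Fin n2 × Fin n3) → ℝ :=
  fun pr => X pr.1 pr.2.1 pr.2.2

lemma tsq_eq_vnsq (X : Tensor n1 n2 n3) : tsq X = vnsq (flat X) := by
  simp [tsq, vnsq, flat, Fintype.sum_prod_type]

lemma frobT_eq_vn (X : Tensor n1 n2 n3) : frobT X = vn (flat X) := by
  unfold frobT vn
  rw [← tsq_eq_vnsq]
  rfl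

lemma flat_add (X Y : Tensor n1 n2 n3) : flat (X + Y) = flat X + flat Y := rfl

lemma frobT_add_le (X Y : Tensor n1 n2 n3) : frobT (X + Y) ≤ frobT X + frobT Y := by
  rw [frobT_eq_vn, frobT_eq_vn, frobT_eq_vn, flat_add]
  exact vn_add_le _ _

lemma tsq_eq_fsq_M1 (X : Tensor n1 n2 n3) : tsq X = fsq (M1 X) := by
  simp only [tsq, fsq, M1, Matrix.of_apply, Fintype.sum_prod_type]
  apply Finset.sum_congr rfl
  intro i1 _
  exact Finset.sum_comm

lemma tsq_eq_fsq_M2 (X : Tensor n1 n2 n3) : tsq X = fsq (M2 X) := by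
  simp only [tsq, fsq, M2, Matrix.of_apply, Fintype.sum_prod_type]
  calc (∑ a : Fin n1, ∑ b : Fin n2, ∑ c : Fin n3, X a b c ^ 2)
      = ∑ b : Fin n2, ∑ a : Fin n1, ∑ c : Fin n3, X a b c ^ 2 := Finset.sum_comm
    _ = ∑ b : Fin n2, ∑ c : Fin n3, ∑ a : Fin n1, X a b c ^ 2 :=
        Finset.sum_congr rfl fun _ _ => Finset.sum_comm

lemma tsq_eq_fsq_M3 (X : Tensor n1 n2 n3) : tsq X = fsq (M3 X) := by
  simp only [tsq, fsq, M3, Matrix.of_apply, Fintype.sum_prod_type]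
  calc (∑ a : Fin n1, ∑ b : Fin n2, ∑ c : Fin n3, X a b c ^ 2)
      = ∑ a : Fin n1, ∑ c : Fin n3, ∑ b : Fin n2, X a b c ^ 2 :=
        Finset.sum_congr rfl fun _ _ => Finset.sum_comm
    _ = ∑ c : Fin n3, ∑ a : Fin n1, ∑ b : Fin n2, X a b c ^ 2 := Finset.sum_comm
    _ = ∑ c : Fin n3, ∑ b : Fin n2, ∑ a : Fin n1, X a b c ^ 2 :=
        Finset.sum_congr rfl fun _ _ => Finset.sum_comm

/-- mode-1 multiplication -/
def mo1 (P : Matrix (Fin m) (Fin n1) ℝ) (Y : Tensor n1 n2 n3) : Tensor m n2 n3 :=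
  fun i1 i2 i3 => ∑ j, P i1 j * Y j i2 i3

/-- mode-2 multiplication -/
def mo2 (P : Matrix (Fin m) (Fin n2) ℝ) (Y : Tensor n1 n2 n3) : Tensor n1 m n3 :=
  fun i1 i2 i3 => ∑ j, P i2 j * Y i1 j i3

/-- mode-3 multiplication -/
def mo3 (P : Matrix (Fin m) (Fin n3) ℝ) (Y : Tensor n1 n2 n3) : Tensor n1 n2 m :=
  fun i1 i2 i3 => ∑ j, P i3 j * Y i1 i2 j

lemma M1_mo1 (P : Matrix (Fin m) (Fin n1) ℝ) (Y : Tensor n1 n2 n3) :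
    M1 (mo1 P Y) = P * M1 Y := by
  ext i pq
  simp [M1, mo1, Matrix.mul_apply]

lemma M2_mo2 (P : Matrix (Fin m) (Fin n2) ℝ) (Y : Tensor n1 n2 n3) :
    M2 (mo2 P Y) = P * M2 Y := by
  ext i pq
  simp [M2, mo2, Matrix.mul_apply]

lemma M3_mo3 (P : Matrix (Fin m) (Fin n3) ℝ) (Y : Tensor n1 n2 n3) :
    M3 (mo3 P Y) = P * M3 Y := by
  ext i pq
  simp [M3, mo3, Matrix.mul_apply]

lemma tucker_eq_mo {r1 r2 r3 : ℕ} (A : Matrix (Fin n1) (Fin r1) ℝ)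
    (B : Matrix (Fin n2) (Fin r2) ℝ) (C : Matrix (Fin n3) (Fin r3) ℝ)
    (S : Tensor r1 r2 r3) : tucker A B C S = mo1 A (mo2 B (mo3 C S)) := by
  funext i1 i2 i3
  simp only [tucker, mo1, mo2, mo3, Finset.mul_sum]
  exact Finset.sum_congr rfl fun _ _ => Finset.sum_congr rfl fun _ _ =>
    Finset.sum_congr rfl fun _ _ => by ring

lemma mo1_one (Y : Tensor n1 n2 n3) : mo1 1 Y = Y := by
  funext i1 i2 i3
  simp [mo1, Matrix.one_apply]

lemma mo2_one (Y : Tensor n1 n2 n3) : mo2 1 Y = Y := by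
  funext i1 i2 i3
  simp [mo2, Matrix.one_apply]

lemma mo3_one (Y : Tensor n1 n2 n3) : mo3 1 Y = Y := by
  funext i1 i2 i3
  simp [mo3, Matrix.one_apply]

lemma mo1_mul (P : Matrix (Fin m) (Fin p) ℝ) (Q : Matrix (Fin p) (Fin n1) ℝ)
    (Y : Tensor n1 n2 n3) : mo1 (P * Q) Y = mo1 P (mo1 Q Y) := by
  funext i1 i2 i3
  simp only [mo1, Matrix.mul_apply, Finset.sum_mul, Finset.mul_sum]
  rw [Finset.sum_comm]
  exact Finset.sum_congr rfl fun _ _ => Finset.sum_congr rfl fun _ _ => by ring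

lemma mo2_mul (P : Matrix (Fin m) (Fin p) ℝ) (Q : Matrix (Fin p) (Fin n2) ℝ)
    (Y : Tensor n1 n2 n3) : mo2 (P * Q) Y = mo2 P (mo2 Q Y) := by
  funext i1 i2 i3
  simp only [mo2, Matrix.mul_apply, Finset.sum_mul, Finset.mul_sum]
  rw [Finset.sum_comm]
  exact Finset.sum_congr rfl fun _ _ => Finset.sum_congr rfl fun _ _ => by ring

lemma mo3_mul (P : Matrix (Fin m) (Fin p) ℝ) (Q : Matrix (Fin p) (Fin n3) ℝ)
    (Y : Tensor n1 n2 n3) : mo3 (P * Q) Y = mo3 P (mo3 Q Y) := by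
  funext i1 i2 i3
  simp only [mo3, Matrix.mul_apply, Finset.sum_mul, Finset.mul_sum]
  rw [Finset.sum_comm]
  exact Finset.sum_congr rfl fun _ _ => Finset.sum_congr rfl fun _ _ => by ring

lemma mo1_mo2_comm (P : Matrix (Fin m) (Fin n1) ℝ) (Q : Matrix (Fin p) (Fin n2) ℝ)
    (Y : Tensor n1 n2 n3) : mo1 P (mo2 Q Y) = mo2 Q (mo1 P Y) := by
  funext i1 i2 i3
  simp only [mo1, mo2, Finset.mul_sum]
  rw [Finset.sum_comm]
  exact Finset.sum_congr rfl fun _ _ => Finset.sum_congr rfl fun _ _ => by ring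

lemma mo1_mo3_comm (P : Matrix (Fin m) (Fin n1) ℝ) (Q : Matrix (Fin p) (Fin n3) ℝ)
    (Y : Tensor n1 n2 n3) : mo1 P (mo3 Q Y) = mo3 Q (mo1 P Y) := by
  funext i1 i2 i3
  simp only [mo1, mo3, Finset.mul_sum]
  rw [Finset.sum_comm]
  exact Finset.sum_congr rfl fun _ _ => Finset.sum_congr rfl fun _ _ => by ring

lemma mo2_mo3_comm (P : Matrix (Fin m) (Fin n2) ℝ) (Q : Matrix (Fin p) (Fin n3) ℝ)
    (Y : Tensor n1 n2 n3) : mo2 P (mo3 Q Y) = mo3 Q (mo2 P Y) := by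
  funext i1 i2 i3
  simp only [mo2, mo3, Finset.mul_sum]
  rw [Finset.sum_comm]
  exact Finset.sum_congr rfl fun _ _ => Finset.sum_congr rfl fun _ _ => by ring

lemma mo1_subM (P Q : Matrix (Fin m) (Fin n1) ℝ) (Y : Tensor n1 n2 n3) :
    mo1 (P - Q) Y = mo1 P Y - mo1 Q Y := by
  funext i1 i2 i3
  simp [mo1, sub_mul, Finset.sum_sub_distrib]

lemma mo2_subM (P Q : Matrix (Fin m) (Fin n2) ℝ) (Y : Tensor n1 n2 n3) :
    mo2 (P - Q) Y = mo2 P Y - mo2 Q Y := by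
  funext i1 i2 i3
  simp [mo2, sub_mul, Finset.sum_sub_distrib]

lemma mo3_subM (P Q : Matrix (Fin m) (Fin n3) ℝ) (Y : Tensor n1 n2 n3) :
    mo3 (P - Q) Y = mo3 P Y - mo3 Q Y := by
  funext i1 i2 i3
  simp [mo3, sub_mul, Finset.sum_sub_distrib]

lemma mo1_sub (P : Matrix (Fin m) (Fin n1) ℝ) (Y Z : Tensor n1 n2 n3) :
    mo1 P (Y - Z) = mo1 P Y - mo1 P Z := by
  funext i1 i2 i3
  simp [mo1, mul_sub, Finset.sum_sub_distrib]

lemma mo2_sub (P : Matrix (Fin m) (Fin n2) ℝ) (Y Z : Tensor n1 n2 n3) :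
    mo2 P (Y - Z) = mo2 P Y - mo2 P Z := by
  funext i1 i2 i3
  simp [mo2, mul_sub, Finset.sum_sub_distrib]

lemma mo3_sub (P : Matrix (Fin m) (Fin n3) ℝ) (Y Z : Tensor n1 n2 n3) :
    mo3 P (Y - Z) = mo3 P Y - mo3 P Z := by
  funext i1 i2 i3
  simp [mo3, mul_sub, Finset.sum_sub_distrib]

lemma mo1_add (P : Matrix (Fin m) (Fin n1) ℝ) (Y Z : Tensor n1 n2 n3) :
    mo1 P (Y + Z) = mo1 P Y + mo1 P Z := by
  funext i1 i2 i3
  simp [mo1, mul_add, Finset.sum_add_distrib]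

lemma mo2_add (P : Matrix (Fin m) (Fin n2) ℝ) (Y Z : Tensor n1 n2 n3) :
    mo2 P (Y + Z) = mo2 P Y + mo2 P Z := by
  funext i1 i2 i3
  simp [mo2, mul_add, Finset.sum_add_distrib]

lemma mo3_add (P : Matrix (Fin m) (Fin n3) ℝ) (Y Z : Tensor n1 n2 n3) :
    mo3 P (Y + Z) = mo3 P Y + mo3 P Z := by
  funext i1 i2 i3
  simp [mo3, mul_add, Finset.sum_add_distrib]

lemma fsq_eq_trace (B : Matrix ι κ ℝ) : fsq B = ∑ i, (B * Bᵀ) i i := by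
  apply Finset.sum_congr rfl
  intro i _
  simp [Matrix.mul_apply, sq]

/-- the Gram trick: replace `M` by the diagonal of singular values -/
lemma fsq_mul_gram {r : ℕ} {M : Matrix (Fin r) κ ℝ} {σ : Fin r → ℝ}
    (h : M * Mᵀ = Matrix.diagonal (fun j => σ j ^ 2)) (A : Matrix ι (Fin r) ℝ) :
    fsq (A * M) = fsq (A * Matrix.diagonal σ) := by
  rw [fsq_eq_trace (A * M), fsq_eq_trace (A * Matrix.diagonal σ)]
  apply Finset.sum_congr rfl
  intro i _
  rw [Matrix.transpose_mul, show A * M * (Mᵀ * Aᵀ) = A * (M * Mᵀ) * Aᵀ by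
    rw [← Matrix.mul_assoc, Matrix.mul_assoc A M Mᵀ], h]
  rw [Matrix.transpose_mul, Matrix.diagonal_transpose,
    show A * Matrix.diagonal σ * (Matrix.diagonal σ * Aᵀ)
      = A * (Matrix.diagonal σ * Matrix.diagonal σ) * Aᵀ by
        rw [← Matrix.mul_assoc, Matrix.mul_assoc A _ _], Matrix.diagonal_mul_diagonal]
  have hd : (Matrix.diagonal fun i => σ i * σ i) = Matrix.diagonal (fun j => σ j ^ 2) := by
    congr 1
    funext j
    ring
  rw [hd]

end Tensors


section Gram

variable {n r : ℕ}

lemma gram_psd (U : Matrix (Fin n) (Fin r) ℝ) : (Uᵀ * U).PosSemidef := by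
  have := Matrix.posSemidef_conjTranspose_mul_self U
  rwa [Matrix.conjTranspose_eq_transpose_of_trivial] at this

/-- the positive semidefinite square root of the Gram matrix -/
def gsq (U : Matrix (Fin n) (Fin r) ℝ) : Matrix (Fin r) (Fin r) ℝ :=
  ((gram_psd U).1.eigenvectorUnitary : Matrix (Fin r) (Fin r) ℝ) *
    diagonal (fun i => Real.sqrt ((gram_psd U).1.eigenvalues i)) *
    (star (gram_psd U).1.eigenvectorUnitary : Matrix (Fin r) (Fin r) ℝ)

lemma gsq_symm (U : Matrix (Fin n) (Fin r) ℝ) : (gsq U)ᵀ = gsq U := by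
  unfold gsq
  simp only [Matrix.transpose_mul, Matrix.diagonal_transpose, Matrix.star_eq_conjTranspose,
    Matrix.conjTranspose_eq_transpose_of_trivial, Matrix.transpose_transpose, Matrix.mul_assoc]

lemma gsq_mul_self (U : Matrix (Fin n) (Fin r) ℝ) : gsq U * gsq U = Uᵀ * U := by
  have hPP : (star (gram_psd U).1.eigenvectorUnitary : Matrix (Fin r) (Fin r) ℝ)
      * ((gram_psd U).1.eigenvectorUnitary : Matrix (Fin r) (Fin r) ℝ) = 1 :=
    Unitary.coe_star_mul_self _
  have hDD : diagonal (fun i => Real.sqrt ((gram_psd U).1.eigenvalues i))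
      * diagonal (fun i => Real.sqrt ((gram_psd U).1.eigenvalues i))
      = diagonal (RCLike.ofReal ∘ (gram_psd U).1.eigenvalues) := by
    rw [diagonal_mul_diagonal]
    congr 1
    funext i
    simp [Real.mul_self_sqrt ((gram_psd U).eigenvalues_nonneg i)]
  have hspec := (gram_psd U).1.spectral_theorem
  unfold gsq
  conv_rhs => rw [hspec]
  rw [Unitary.conjStarAlgAut_apply]
  simp only [Matrix.mul_assoc]
  rw [← Matrix.mul_assoc (star (gram_psd U).1.eigenvectorUnitary : Matrix (Fin r) (Fin r) ℝ),
    hPP, Matrix.one_mul, ← Matrix.mul_assoc (diagonal _), hDD]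

lemma invSqrtGram_eq (U : Matrix (Fin n) (Fin r) ℝ) :
    invSqrtGram U = (gsq U)⁻¹ := dif_pos (gram_psd U)

variable {U : Matrix (Fin n) (Fin r) ℝ} {a : ℝ}

section WithBound

variable (ha : 0 < a) (hL : ∀ x : Fin r → ℝ, a * vnsq x ≤ vnsq (U *ᵥ x))

include ha hL

lemma gram_posdef : (Uᵀ * U).PosDef := by
  refine Matrix.PosDef.of_dotProduct_mulVec_pos (gram_psd U).1 fun x hx => ?_
  have hs : star x = x := by
    funext i
    simp
  rw [hs, dot_gram]
  exact lt_of_lt_of_le (mul_pos ha (vnsq_pos hx)) (hL x)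

lemma gram_det_unit : IsUnit (Uᵀ * U).det :=
  isUnit_iff_ne_zero.mpr (gram_posdef ha hL).det_pos.ne'

lemma sqrt_symm : (gsq U)ᵀ = gsq U := by
  exact gsq_symm U

lemma sqrt_det_unit : IsUnit (gsq U).det := by
  have h := gsq_mul_self U
  have hdet : (gsq U).det * (gsq U).det = (Uᵀ * U).det := by
    rw [← Matrix.det_mul, h]
  have := gram_det_unit ha hL
  rw [← hdet] at this
  exact isUnit_of_mul_isUnit_left this

lemma sqrt_mul_inv : gsq U * (gsq U)⁻¹ = 1 :=
  Matrix.mul_nonsing_inv _ (sqrt_det_unit ha hL)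

lemma inv_mul_sqrt : (gsq U)⁻¹ * gsq U = 1 :=
  Matrix.nonsing_inv_mul _ (sqrt_det_unit ha hL)

lemma gram_inv_eq : (Uᵀ * U)⁻¹ = (gsq U)⁻¹ * (gsq U)⁻¹ := by
  calc (Uᵀ * U)⁻¹ = (gsq U * gsq U)⁻¹ := by
        rw [gsq_mul_self U]
    _ = (gsq U)⁻¹ * (gsq U)⁻¹ := Matrix.mul_inv_rev _ _

lemma inv_sqrt_symm : ((gsq U)⁻¹)ᵀ = (gsq U)⁻¹ := by
  rw [Matrix.transpose_nonsing_inv, sqrt_symm ha hL]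

lemma vnsq_sqrt_mulVec (y : Fin r → ℝ) :
    vnsq (gsq U *ᵥ y) = y ⬝ᵥ ((Uᵀ * U) *ᵥ y) := by
  rw [← dot_gram (gsq U) y, sqrt_symm ha hL, gsq_mul_self U]

/-- bound (b): `‖R⁻¹ x‖² ≤ a⁻¹ ‖x‖²` -/
lemma bound_invsqrt (x : Fin r → ℝ) :
    vnsq ((gsq U)⁻¹ *ᵥ x) ≤ a⁻¹ * vnsq x := by
  set y := (gsq U)⁻¹ *ᵥ x with hy
  have h1 : a * vnsq y ≤ vnsq (U *ᵥ y) := hL y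
  have h2 : vnsq (U *ᵥ y) = vnsq x := by
    rw [← dot_gram, ← vnsq_sqrt_mulVec ha hL]
    congr 1
    rw [hy, Matrix.mulVec_mulVec, sqrt_mul_inv ha hL, Matrix.one_mulVec]
  rw [h2] at h1
  calc vnsq y = a⁻¹ * (a * vnsq y) := by field_simp
    _ ≤ a⁻¹ * vnsq x := by
        apply mul_le_mul_of_nonneg_left h1 (le_of_lt (inv_pos.mpr ha))

/-- bound (c): `‖R⁻¹ Uᵀ w‖² ≤ ‖w‖²` -/
lemma bound_invsqrt_ut (w : Fin n → ℝ) :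
    vnsq (((gsq U)⁻¹ * Uᵀ) *ᵥ w) ≤ vnsq w := by
  set R := gsq U with hR
  set z := ((R⁻¹ * Uᵀ) *ᵥ w) with hz
  have key : vnsq z ≤ vn z * vn w := by
    have h1 : vnsq z = ((U * R⁻¹) *ᵥ z) ⬝ᵥ w := by
      rw [← dotProduct_self_eq_vnsq]
      nth_rewrite 2 [hz]
      rw [Matrix.dotProduct_mulVec, ← Matrix.mulVec_transpose, Matrix.transpose_mul,
        Matrix.transpose_transpose, inv_sqrt_symm ha hL]
    have h2 : vnsq ((U * R⁻¹) *ᵥ z) = vnsq z := by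
      rw [← Matrix.mulVec_mulVec, ← dot_gram, ← vnsq_sqrt_mulVec ha hL,
        Matrix.mulVec_mulVec, ← hR, sqrt_mul_inv ha hL, Matrix.one_mulVec]
    have h3 : vn ((U * R⁻¹) *ᵥ z) = vn z := by
      unfold vn
      rw [h2]
    calc vnsq z = ((U * R⁻¹) *ᵥ z) ⬝ᵥ w := h1
      _ ≤ vn ((U * R⁻¹) *ᵥ z) * vn w := dot_le_vn _ _
      _ = vn z * vn w := by rw [h3]
  have hvz : vn z ≤ vn w := by
    rcases eq_or_lt_of_le (vn_nonneg z) with h0 | h0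
    · rw [← h0]
      exact vn_nonneg w
    · have : vn z * vn z ≤ vn z * vn w := by
        calc vn z * vn z = vnsq z := by rw [← vn_sq z]; ring
          _ ≤ vn z * vn w := key
      exact le_of_mul_le_mul_left this h0
  exact vnsq_le_of_vn_le hvz

/-- bound (d): `‖(UᵀU)⁻¹ Uᵀ w‖² ≤ a⁻¹ ‖w‖²` -/
lemma bound_pinv (w : Fin n → ℝ) :
    vnsq (((Uᵀ * U)⁻¹ * Uᵀ) *ᵥ w) ≤ a⁻¹ * vnsq w := by
  have heq : ((Uᵀ * U)⁻¹ * Uᵀ) *ᵥ w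
      = (gsq U)⁻¹ *ᵥ (((gsq U)⁻¹ * Uᵀ) *ᵥ w) := by
    rw [Matrix.mulVec_mulVec, ← Matrix.mul_assoc, ← gram_inv_eq ha hL]
  rw [heq]
  calc vnsq ((gsq U)⁻¹ *ᵥ (((gsq U)⁻¹ * Uᵀ) *ᵥ w))
      ≤ a⁻¹ * vnsq (((gsq U)⁻¹ * Uᵀ) *ᵥ w) := bound_invsqrt ha hL _
    _ ≤ a⁻¹ * vnsq w := by
        apply mul_le_mul_of_nonneg_left (bound_invsqrt_ut ha hL w)
          (le_of_lt (inv_pos.mpr ha))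

lemma pinv_mul_self : ((Uᵀ * U)⁻¹ * Uᵀ) * U = 1 := by
  rw [Matrix.mul_assoc, Matrix.nonsing_inv_mul _ (gram_det_unit ha hL)]

end WithBound

lemma vnsq_mulVec_orth {Us : Matrix (Fin n) (Fin r) ℝ} (h : Usᵀ * Us = 1) (x : Fin r → ℝ) :
    vnsq (Us *ᵥ x) = vnsq x := by
  rw [← dot_gram, h, Matrix.one_mulVec, dotProduct_self_eq_vnsq]

end Gram


section Close

lemma vn_neg {ι : Type*} [Fintype ι] (x : ι → ℝ) : vn (-x) = vn x := by
  unfold vn vnsq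
  simp

/-- `‖Δ‖_F ≤ ε` from `‖Δ Σ‖_F ≤ ε σmin` -/
lemma fsq_delta_le {n r : ℕ} (hr : 0 < r) {Δ : Matrix (Fin n) (Fin r) ℝ} {σ : Fin r → ℝ}
    {ε sm : ℝ} (hσp : ∀ i, 0 < σ i) (hσmono : ∀ i j : Fin r, i ≤ j → σ j ≤ σ i)
    (hsm_le : sm ≤ σ ⟨r - 1, by omega⟩) (hsm_pos : 0 < sm)
    (h : fsq (Δ * Matrix.diagonal σ) ≤ ε ^ 2 * sm ^ 2) : fsq Δ ≤ ε ^ 2 := by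
  set last := σ ⟨r - 1, by omega⟩ with hlast
  have hlp : 0 < last := hσp _
  have hkey : last ^ 2 * fsq Δ ≤ fsq (Δ * Matrix.diagonal σ) := by
    rw [fsq, Finset.mul_sum]
    apply Finset.sum_le_sum
    intro i _
    rw [Finset.mul_sum]
    apply Finset.sum_le_sum
    intro j _
    have hσj : last ≤ σ j := by
      apply hσmono j ⟨r - 1, by omega⟩
      have hj : (j : ℕ) ≤ r - 1 := Nat.le_pred_of_lt j.isLt
      exact Fin.le_def.mpr hj
    have : (Δ * Matrix.diagonal σ) i j = Δ i j * σ j := Matrix.mul_diagonal _ _ _ _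
    rw [this]
    calc last ^ 2 * Δ i j ^ 2 ≤ σ j ^ 2 * Δ i j ^ 2 := by
          apply mul_le_mul_of_nonneg_right _ (sq_nonneg _)
          exact pow_le_pow_left₀ hlp.le hσj 2
      _ = (Δ i j * σ j) ^ 2 := by ring
  have hsm2 : sm ^ 2 ≤ last ^ 2 := pow_le_pow_left₀ hsm_pos.le hsm_le 2
  have h2 : last ^ 2 * fsq Δ ≤ ε ^ 2 * last ^ 2 := by
    calc last ^ 2 * fsq Δ ≤ ε ^ 2 * sm ^ 2 := hkey.trans h
      _ ≤ ε ^ 2 * last ^ 2 := mul_le_mul_of_nonneg_left hsm2 (sq_nonneg _)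
  nlinarith [h2, pow_pos hlp 2]

/-- lower bound on the Gram quadratic form near an orthonormal matrix -/
lemma lower_bound_gram {n r : ℕ} {Us U : Matrix (Fin n) (Fin r) ℝ} {ε : ℝ}
    (hUo : Usᵀ * Us = 1) (hΔ : fsq (U - Us) ≤ ε ^ 2) (hε0 : 0 ≤ ε) (hε1 : ε ≤ 1) :
    ∀ x : Fin r → ℝ, (1 - ε) ^ 2 * vnsq x ≤ vnsq (U *ᵥ x) := by
  intro x
  have h0 : U - (U - Us) = Us := by abel
  have hsplit : Us *ᵥ x = U *ᵥ x + -((U - Us) *ᵥ x) := by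
    calc Us *ᵥ x = (U - (U - Us)) *ᵥ x := by rw [h0]
      _ = U *ᵥ x - (U - Us) *ᵥ x := Matrix.sub_mulVec _ _ _
      _ = U *ᵥ x + -((U - Us) *ᵥ x) := by abel
  have h1 : vn (Us *ᵥ x) = vn x := by
    unfold vn
    rw [vnsq_mulVec_orth hUo]
  have h2 : vnsq ((U - Us) *ᵥ x) ≤ ε ^ 2 * vnsq x :=
    (vnsq_mulVec_le _ _).trans (mul_le_mul_of_nonneg_right hΔ (vnsq_nonneg x))
  have h2' : vn ((U - Us) *ᵥ x) ≤ ε * vn x := by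
    have : vn ((U - Us) *ᵥ x) ≤ Real.sqrt (ε ^ 2 * vnsq x) := Real.sqrt_le_sqrt h2
    rwa [Real.sqrt_mul (sq_nonneg ε), Real.sqrt_sq hε0] at this
  have h3 : vn x ≤ vn (U *ᵥ x) + ε * vn x := by
    calc vn x = vn (Us *ᵥ x) := h1.symm
      _ = vn (U *ᵥ x + -((U - Us) *ᵥ x)) := by rw [hsplit]
      _ ≤ vn (U *ᵥ x) + vn (-((U - Us) *ᵥ x)) := vn_add_le _ _
      _ = vn (U *ᵥ x) + vn ((U - Us) *ᵥ x) := by rw [vn_neg]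
      _ ≤ vn (U *ᵥ x) + ε * vn x := by linarith
  have h4 : (1 - ε) * vn x ≤ vn (U *ᵥ x) := by linarith
  have h5 : ((1 - ε) * vn x) ^ 2 ≤ vn (U *ᵥ x) ^ 2 := by
    apply pow_le_pow_left₀ _ h4 2
    have := vn_nonneg x
    nlinarith
  rw [vn_sq] at h5
  calc (1 - ε) ^ 2 * vnsq x = ((1 - ε) * vn x) ^ 2 := by rw [← vn_sq x]; ring
    _ ≤ vnsq (U *ᵥ x) := h5

/-- the key algebraic decomposition of the projected difference tensor -/
lemma key_decomp {n1 n2 n3 r1 r2 r3 : ℕ}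
    (PU : Matrix (Fin r1) (Fin n1) ℝ) (PV : Matrix (Fin r2) (Fin n2) ℝ)
    (PW : Matrix (Fin r3) (Fin n3) ℝ)
    (U Us : Matrix (Fin n1) (Fin r1) ℝ) (V Vs : Matrix (Fin n2) (Fin r2) ℝ)
    (W Ws : Matrix (Fin n3) (Fin r3) ℝ) (S : Tensor r1 r2 r3)
    (hV : PV * V = 1) (hW : PW * W = 1) :
    mo1 PU (mo2 PV (mo3 PW (tucker U V W S - tucker Us Vs Ws S)))
    = mo1 (PU * (U - Us)) S
      + (mo1 (PU * Us) (mo2 (PV * (V - Vs)) S)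
      + mo1 (PU * Us) (mo2 (PV * Vs) (mo3 (PW * (W - Ws)) S))) := by
  have hdiff : tucker U V W S - tucker Us Vs Ws S
      = mo1 (U - Us) (mo2 V (mo3 W S)) + (mo1 Us (mo2 (V - Vs) (mo3 W S))
        + mo1 Us (mo2 Vs (mo3 (W - Ws) S))) := by
    rw [tucker_eq_mo, tucker_eq_mo]
    simp only [mo1_subM, mo2_subM, mo3_subM, mo1_sub, mo2_sub, mo3_sub]
    abel
  rw [hdiff, mo3_add, mo2_add, mo1_add, mo3_add, mo2_add, mo1_add]
  congr 1
  · rw [← mo1_mo3_comm, ← mo1_mo2_comm, ← mo1_mul, ← mo2_mo3_comm, ← mo2_mul, ← mo3_mul,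
      hV, hW, mo3_one, mo2_one]
  congr 1
  · rw [← mo1_mo3_comm, ← mo1_mo2_comm, ← mo1_mul, ← mo2_mo3_comm, ← mo2_mul, ← mo3_mul,
      hW, mo3_one]
  · rw [← mo1_mo3_comm, ← mo1_mo2_comm, ← mo1_mul, ← mo2_mo3_comm, ← mo2_mul, ← mo3_mul]

end Close


/-- bounds on `((1-ε)²)⁻¹` -/
lemma iv_bounds {ε iv : ℝ} (hε : 0 < ε) (hεb : ε ≤ 1/2) (hivdef : iv = ((1 - ε) ^ 2)⁻¹) :
    1 ≤ iv ∧ iv ^ 3 ≤ 1 + 384 * ε := by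
  have hε0 : (0:ℝ) ≤ ε := hε.le
  have ha : (0:ℝ) < (1 - ε) ^ 2 := pow_pos (by linarith) 2
  have hainv : (1 - ε) ^ 2 * iv = 1 := by rw [hivdef]; exact mul_inv_cancel₀ ha.ne'
  have hivn : 0 ≤ iv := hivdef ▸ inv_nonneg.mpr ha.le
  have h1e : (1 - ε) ^ 2 ≤ 1 := by nlinarith
  have hiv1 : 1 ≤ iv := by
    have h' := mul_le_mul_of_nonneg_right h1e hivn
    rw [one_mul] at h'
    linarith [hainv, h']
  refine ⟨hiv1, ?_⟩
  have hcube : iv ^ 3 * (1 - ε) ^ 6 = 1 := by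
    calc iv ^ 3 * (1 - ε) ^ 6 = ((1 - ε) ^ 2 * iv) ^ 3 := by ring
      _ = 1 := by rw [hainv]; norm_num
  have h64 : (1:ℝ)/64 ≤ (1 - ε) ^ 6 := by
    have h12 : (1:ℝ)/2 ≤ 1 - ε := by linarith
    have h' := pow_le_pow_left₀ (by norm_num : (0:ℝ) ≤ 1/2) h12 6
    calc (1:ℝ)/64 = (1/2:ℝ)^6 := by norm_num
      _ ≤ (1 - ε) ^ 6 := h'
  have h6 : 1 - 6 * ε ≤ (1 - ε) ^ 6 := by
    nlinarith [mul_nonneg (sq_nonneg ε) (by linarith : (0:ℝ) ≤ 15 - 20 * ε),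
      mul_nonneg (pow_nonneg hε0 4) (by linarith : (0:ℝ) ≤ 15 - 6 * ε),
      pow_nonneg hε0 6]
  have hkey : (1:ℝ) ≤ (1 + 384 * ε) * (1 - ε) ^ 6 := by
    have hf : ε * (1/64) ≤ ε * (1 - ε) ^ 6 := mul_le_mul_of_nonneg_left h64 hε0
    nlinarith [h6, hf]
  calc iv ^ 3 = iv ^ 3 * 1 := by ring
    _ ≤ iv ^ 3 * ((1 + 384 * ε) * (1 - ε) ^ 6) :=
        mul_le_mul_of_nonneg_left hkey (pow_nonneg hivn 3)
    _ = (1 + 384 * ε) * (iv ^ 3 * (1 - ε) ^ 6) := by ring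
    _ = 1 + 384 * ε := by rw [hcube]; ring

/-- final numeric assembly, kept separate so that `linarith` works in a clean context -/
lemma final_arith {ε L t1 t2 t3 d1 d2 d3 c1 c2 c3 cS iv : ℝ}
    (hε : 0 < ε)
    (htri : L ≤ t1 + (t2 + t3)) (hL0 : 0 ≤ L) (h1 : 0 ≤ t1) (h2 : 0 ≤ t2) (h3 : 0 ≤ t3)
    (hb1 : t1 ^ 2 ≤ iv * d1) (hb2 : t2 ^ 2 ≤ iv * (iv * d2))
    (hb3 : t3 ^ 2 ≤ iv * (iv * (iv * d3)))
    (hiv1 : 1 ≤ iv) (hiv3 : iv ^ 3 ≤ 1 + 384 * ε)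
    (hd1n : 0 ≤ d1) (hd2n : 0 ≤ d2) (hd3n : 0 ≤ d3)
    (hd1le : d1 ≤ c1) (hd2le : d2 ≤ c2) (hd3le : d3 ≤ c3)
    (hc1 : 0 ≤ c1) (hc2 : 0 ≤ c2) (hc3 : 0 ≤ c3) (hcS : 0 ≤ cS) :
    L ^ 2 ≤ 3 * (d1 + d2 + d3) + 1153 * ε * (c1 + c2 + c3 + cS) := by
  have hε0 : (0:ℝ) ≤ ε := hε.le
  have hivn : (0:ℝ) ≤ iv := by linarith
  have hivs1 : 0 ≤ (iv - 1) * iv := mul_nonneg (by linarith) hivn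
  have hivs2 : 0 ≤ (iv - 1) * iv * iv := mul_nonneg hivs1 hivn
  have hiv13 : iv ≤ iv ^ 3 := by nlinarith [hivs1, hivs2]
  have hiv23 : iv * iv ≤ iv ^ 3 := by nlinarith [hivs2]
  have hsq3 : L ^ 2 ≤ 3 * (t1 ^ 2 + t2 ^ 2 + t3 ^ 2) := by
    nlinarith [sq_nonneg (t1 - t2), sq_nonneg (t1 - t3), sq_nonneg (t2 - t3), htri]
  have e1 : t1 ^ 2 ≤ iv ^ 3 * d1 :=
    hb1.trans (mul_le_mul_of_nonneg_right hiv13 hd1n)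
  have e2 : t2 ^ 2 ≤ iv ^ 3 * d2 := by
    have hq : iv * (iv * d2) = (iv * iv) * d2 := by ring
    exact hb2.trans (by rw [hq]; exact mul_le_mul_of_nonneg_right hiv23 hd2n)
  have e3 : t3 ^ 2 ≤ iv ^ 3 * d3 := by
    have hq : iv * (iv * (iv * d3)) = iv ^ 3 * d3 := by ring
    exact hb3.trans (le_of_eq hq)
  have g1 : iv ^ 3 * d1 ≤ (1 + 384 * ε) * d1 := mul_le_mul_of_nonneg_right hiv3 hd1n
  have g2 : iv ^ 3 * d2 ≤ (1 + 384 * ε) * d2 := mul_le_mul_of_nonneg_right hiv3 hd2n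
  have g3 : iv ^ 3 * d3 ≤ (1 + 384 * ε) * d3 := mul_le_mul_of_nonneg_right hiv3 hd3n
  have f1 : ε * d1 ≤ ε * c1 := mul_le_mul_of_nonneg_left hd1le hε0
  have f2 : ε * d2 ≤ ε * c2 := mul_le_mul_of_nonneg_left hd2le hε0
  have f3 : ε * d3 ≤ ε * c3 := mul_le_mul_of_nonneg_left hd3le hε0
  linarith [hsq3, e1, e2, e3, g1, g2, g3, f1, f2, f3,
    mul_nonneg hε0 hcS, mul_nonneg hε0 hc1, mul_nonneg hε0 hc2, mul_nonneg hε0 hc3]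

end AuxProof

set_option maxHeartbeats 2000000 in
/-- upper bound on the quadratic term 𝔖₂ (Claim 4). -/
theorem claim_S2
    : ∃ C2 εbar : ℝ, 1 < C2 ∧ 0 < εbar ∧ εbar < 1 ∧
      ∀ (n1 n2 n3 r1 r2 r3 : ℕ), 0 < n1 → 0 < n2 → 0 < n3 → 0 < r1 → 0 < r2 → 0 < r3 →
      ∀ (σ1 : Fin r1 → ℝ) (σ2 : Fin r2 → ℝ) (σ3 : Fin r3 → ℝ)
        (Fs : Quad n1 n2 n3 r1 r2 r3), GroundTruth σ1 σ2 σ3 Fs →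
      ∀ ε : ℝ, 0 < ε → ε ≤ εbar →
      ∀ F : Quad n1 n2 n3 r1 r2 r3,
        alignedClose σ1 σ2 σ3 F Fs ε →
        (frobT (tucker (((F.U)ᵀ * F.U)⁻¹ * (F.U)ᵀ) (((F.V)ᵀ * F.V)⁻¹ * (F.V)ᵀ)
            (((F.W)ᵀ * F.W)⁻¹ * (F.W)ᵀ) (tucker F.U F.V F.W Fs.S - Fs.X))) ^ 2
          ≤ 3 * ((frob (invSqrtGram F.U * (F.U)ᵀ * (F.U - Fs.U) * Matrix.diagonal σ1)) ^ 2
              + (frob (invSqrtGram F.V * (F.V)ᵀ * (F.V - Fs.V) * Matrix.diagonal σ2)) ^ 2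
              + (frob (invSqrtGram F.W * (F.W)ᵀ * (F.W - Fs.W) * Matrix.diagonal σ3)) ^ 2)
            + C2 * ε * ((frob ((F.U - Fs.U) * Matrix.diagonal σ1)) ^ 2
                + (frob ((F.V - Fs.V) * Matrix.diagonal σ2)) ^ 2
                + (frob ((F.W - Fs.W) * Matrix.diagonal σ3)) ^ 2
                + (frobT (F.S - Fs.S)) ^ 2) := by
  refine ⟨1153, 1/2, by norm_num, by norm_num, by norm_num, ?_⟩
  intro n1 n2 n3 r1 r2 r3 hn1 hn2 hn3 hr1 hr2 hr3 σ1 σ2 σ3 Fs hGT ε hε hεb F hclose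
  obtain ⟨hUo, hVo, hWo, hS1, hS2, hS3, hσ1p, hσ2p, hσ3p, hσ1m, hσ2m, hσ3m⟩ := hGT
  have hε0 : (0:ℝ) ≤ ε := hε.le
  have hε1 : ε ≤ 1 := by linarith
  -- sigmaMin facts
  have hl1 : lastVal σ1 = σ1 ⟨r1 - 1, by omega⟩ := dif_pos hr1
  have hl2 : lastVal σ2 = σ2 ⟨r2 - 1, by omega⟩ := dif_pos hr2
  have hl3 : lastVal σ3 = σ3 ⟨r3 - 1, by omega⟩ := dif_pos hr3
  have hsm1 : sigmaMin σ1 σ2 σ3 ≤ σ1 ⟨r1 - 1, by omega⟩ := by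
    rw [← hl1]; exact min_le_left _ _
  have hsm2 : sigmaMin σ1 σ2 σ3 ≤ σ2 ⟨r2 - 1, by omega⟩ := by
    rw [← hl2]; exact le_trans (min_le_right _ _) (min_le_left _ _)
  have hsm3 : sigmaMin σ1 σ2 σ3 ≤ σ3 ⟨r3 - 1, by omega⟩ := by
    rw [← hl3]; exact le_trans (min_le_right _ _) (min_le_right _ _)
  have hsmp : 0 < sigmaMin σ1 σ2 σ3 := by
    apply lt_min
    · rw [hl1]; exact hσ1p _
    apply lt_min
    · rw [hl2]; exact hσ2p _
    · rw [hl3]; exact hσ3p _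
  -- closeness components
  unfold alignedClose at hclose
  rw [frob_sq, frob_sq, frob_sq, frobT_sq] at hclose
  have hnn2 : 0 ≤ fsq ((F.V - Fs.V) * Matrix.diagonal σ2) := fsq_nonneg _
  have hnn1 : 0 ≤ fsq ((F.U - Fs.U) * Matrix.diagonal σ1) := fsq_nonneg _
  have hnn3 : 0 ≤ fsq ((F.W - Fs.W) * Matrix.diagonal σ3) := fsq_nonneg _
  have hnnS : 0 ≤ tsq (F.S - Fs.S) := tsq_nonneg _
  have hUc : fsq ((F.U - Fs.U) * Matrix.diagonal σ1) ≤ ε ^ 2 * sigmaMin σ1 σ2 σ3 ^ 2 := by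
    linarith
  have hVc : fsq ((F.V - Fs.V) * Matrix.diagonal σ2) ≤ ε ^ 2 * sigmaMin σ1 σ2 σ3 ^ 2 := by
    linarith
  have hWc : fsq ((F.W - Fs.W) * Matrix.diagonal σ3) ≤ ε ^ 2 * sigmaMin σ1 σ2 σ3 ^ 2 := by
    linarith
  have hεdU : fsq (F.U - Fs.U) ≤ ε ^ 2 := fsq_delta_le hr1 hσ1p hσ1m hsm1 hsmp hUc
  have hεdV : fsq (F.V - Fs.V) ≤ ε ^ 2 := fsq_delta_le hr2 hσ2p hσ2m hsm2 hsmp hVc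
  have hεdW : fsq (F.W - Fs.W) ≤ ε ^ 2 := fsq_delta_le hr3 hσ3p hσ3m hsm3 hsmp hWc
  have hLU := lower_bound_gram hUo hεdU hε0 hε1
  have hLV := lower_bound_gram hVo hεdV hε0 hε1
  have hLW := lower_bound_gram hWo hεdW hε0 hε1
  have ha : (0:ℝ) < (1 - ε) ^ 2 := pow_pos (by linarith) 2
  -- abbreviations
  set PU := ((F.U)ᵀ * F.U)⁻¹ * (F.U)ᵀ with hPU
  set PV := ((F.V)ᵀ * F.V)⁻¹ * (F.V)ᵀ with hPV
  set PW := ((F.W)ᵀ * F.W)⁻¹ * (F.W)ᵀ with hPW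
  have hpV : PV * F.V = 1 := pinv_mul_self ha hLV
  have hpW : PW * F.W = 1 := pinv_mul_self ha hLW
  -- decompose the tensor
  have hX : Fs.X = tucker Fs.U Fs.V Fs.W Fs.S := rfl
  rw [hX, tucker_eq_mo PU PV PW,
    key_decomp PU PV PW F.U Fs.U F.V Fs.V F.W Fs.W Fs.S hpV hpW]
  -- convert RHS norms to squared sums
  rw [frob_sq, frob_sq, frob_sq, frob_sq, frob_sq, frob_sq, frobT_sq (F.S - Fs.S)]
  set iv := ((1 - ε) ^ 2)⁻¹ with hiv
  set d1 := fsq (invSqrtGram F.U * (F.U)ᵀ * (F.U - Fs.U) * Matrix.diagonal σ1) with hd1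
  set d2 := fsq (invSqrtGram F.V * (F.V)ᵀ * (F.V - Fs.V) * Matrix.diagonal σ2) with hd2
  set d3 := fsq (invSqrtGram F.W * (F.W)ᵀ * (F.W - Fs.W) * Matrix.diagonal σ3) with hd3
  set T1 := mo1 (PU * (F.U - Fs.U)) Fs.S with hT1
  set T2 := mo1 (PU * Fs.U) (mo2 (PV * (F.V - Fs.V)) Fs.S) with hT2
  set T3 := mo1 (PU * Fs.U) (mo2 (PV * Fs.V) (mo3 (PW * (F.W - Fs.W)) Fs.S)) with hT3
  -- bound for the first term
  have hb1 : frobT T1 ^ 2 ≤ iv * d1 := by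
    rw [hT1, frobT_sq, tsq_eq_fsq_M1, M1_mo1, fsq_mul_gram hS1]
    have hmat : (PU * (F.U - Fs.U)) * Matrix.diagonal σ1
        = (gsq F.U)⁻¹
          * (invSqrtGram F.U * (F.U)ᵀ * (F.U - Fs.U) * Matrix.diagonal σ1) := by
      rw [invSqrtGram_eq, hPU, gram_inv_eq ha hLU]
      simp only [Matrix.mul_assoc]
    rw [hmat, hd1]
    exact fsq_mul_le (bound_invsqrt ha hLU) _
  -- the projector onto the aligned factor has norm at most iv
  have hMU : ∀ x, vnsq ((PU * Fs.U) *ᵥ x) ≤ iv * vnsq x := by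
    intro x
    rw [← Matrix.mulVec_mulVec]
    calc vnsq (PU *ᵥ (Fs.U *ᵥ x)) ≤ iv * vnsq (Fs.U *ᵥ x) := by
          rw [hPU, hiv]; exact bound_pinv ha hLU _
      _ = iv * vnsq x := by rw [vnsq_mulVec_orth hUo]
  have hMV : ∀ x, vnsq ((PV * Fs.V) *ᵥ x) ≤ iv * vnsq x := by
    intro x
    rw [← Matrix.mulVec_mulVec]
    calc vnsq (PV *ᵥ (Fs.V *ᵥ x)) ≤ iv * vnsq (Fs.V *ᵥ x) := by
          rw [hPV, hiv]; exact bound_pinv ha hLV _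
      _ = iv * vnsq x := by rw [vnsq_mulVec_orth hVo]
  -- bound for the second term
  have hb2 : frobT T2 ^ 2 ≤ iv * (iv * d2) := by
    rw [hT2, frobT_sq, tsq_eq_fsq_M1, M1_mo1]
    calc fsq ((PU * Fs.U) * M1 (mo2 (PV * (F.V - Fs.V)) Fs.S))
        ≤ iv * fsq (M1 (mo2 (PV * (F.V - Fs.V)) Fs.S)) := fsq_mul_le hMU _
      _ ≤ iv * (iv * d2) := by
          apply mul_le_mul_of_nonneg_left _ (inv_nonneg.mpr ha.le)
          rw [← tsq_eq_fsq_M1, tsq_eq_fsq_M2, M2_mo2, fsq_mul_gram hS2]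
          have hmat : (PV * (F.V - Fs.V)) * Matrix.diagonal σ2
              = (gsq F.V)⁻¹
                * (invSqrtGram F.V * (F.V)ᵀ * (F.V - Fs.V) * Matrix.diagonal σ2) := by
            rw [invSqrtGram_eq, hPV, gram_inv_eq ha hLV]
            simp only [Matrix.mul_assoc]
          rw [hmat, hd2]
          exact fsq_mul_le (bound_invsqrt ha hLV) _
  -- bound for the third term
  have hb3 : frobT T3 ^ 2 ≤ iv * (iv * (iv * d3)) := by
    rw [hT3, frobT_sq, tsq_eq_fsq_M1, M1_mo1]
    calc fsq ((PU * Fs.U) * M1 (mo2 (PV * Fs.V) (mo3 (PW * (F.W - Fs.W)) Fs.S)))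
        ≤ iv * fsq (M1 (mo2 (PV * Fs.V) (mo3 (PW * (F.W - Fs.W)) Fs.S))) := fsq_mul_le hMU _
      _ ≤ iv * (iv * (iv * d3)) := by
          apply mul_le_mul_of_nonneg_left _ (inv_nonneg.mpr ha.le)
          rw [← tsq_eq_fsq_M1, tsq_eq_fsq_M2, M2_mo2]
          calc fsq ((PV * Fs.V) * M2 (mo3 (PW * (F.W - Fs.W)) Fs.S))
              ≤ iv * fsq (M2 (mo3 (PW * (F.W - Fs.W)) Fs.S)) := fsq_mul_le hMV _
            _ ≤ iv * (iv * d3) := by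
                apply mul_le_mul_of_nonneg_left _ (inv_nonneg.mpr ha.le)
                rw [← tsq_eq_fsq_M2, tsq_eq_fsq_M3, M3_mo3, fsq_mul_gram hS3]
                have hmat : (PW * (F.W - Fs.W)) * Matrix.diagonal σ3
                    = (gsq F.W)⁻¹
                      * (invSqrtGram F.W * (F.W)ᵀ * (F.W - Fs.W) * Matrix.diagonal σ3) := by
                  rw [invSqrtGram_eq, hPW, gram_inv_eq ha hLW]
                  simp only [Matrix.mul_assoc]
                rw [hmat, hd3]
                exact fsq_mul_le (bound_invsqrt ha hLW) _
  -- the D-matrices are dominated by the raw differences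
  have hcontract : ∀ {n r : ℕ} (U : Matrix (Fin n) (Fin r) ℝ)
      (hL : ∀ x : Fin r → ℝ, (1 - ε) ^ 2 * vnsq x ≤ vnsq (U *ᵥ x))
      (N : Matrix (Fin n) (Fin r) ℝ) (σ : Fin r → ℝ),
      fsq (invSqrtGram U * Uᵀ * N * Matrix.diagonal σ) ≤ fsq (N * Matrix.diagonal σ) := by
    intro n r U hL N σ
    have hmat : invSqrtGram U * Uᵀ * N * Matrix.diagonal σ
        = ((gsq U)⁻¹ * Uᵀ) * (N * Matrix.diagonal σ) := by
      rw [invSqrtGram_eq]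
      simp only [Matrix.mul_assoc]
    rw [hmat]
    have := fsq_mul_le (P := (gsq U)⁻¹ * Uᵀ) (c := 1)
      (fun x => by rw [one_mul]; exact bound_invsqrt_ut ha hL x) (N * Matrix.diagonal σ)
    rwa [one_mul] at this
  have hd1le : d1 ≤ fsq ((F.U - Fs.U) * Matrix.diagonal σ1) := hcontract F.U hLU _ _
  have hd2le : d2 ≤ fsq ((F.V - Fs.V) * Matrix.diagonal σ2) := hcontract F.V hLV _ _
  have hd3le : d3 ≤ fsq ((F.W - Fs.W) * Matrix.diagonal σ3) := hcontract F.W hLW _ _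
  have hd1n : 0 ≤ d1 := fsq_nonneg _
  have hd2n : 0 ≤ d2 := fsq_nonneg _
  have hd3n : 0 ≤ d3 := fsq_nonneg _
  obtain ⟨hiv1, hiv3⟩ := iv_bounds hε hεb hiv
  exact final_arith hε
    (le_trans (frobT_add_le _ _) (by linarith [frobT_add_le T2 T3]))
    (frobT_nonneg _) (frobT_nonneg T1) (frobT_nonneg T2) (frobT_nonneg T3)
    hb1 hb2 hb3 hiv1 hiv3 hd1n hd2n hd3n hd1le hd2le hd3le hnn1 hnn2 hnn3 hnnS

end ScaledGD
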